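/- arXiv:2409.04353 — 3 statements merged into one kernel-verified Lean document; each statement's English description precedes it below -/
import Mathlib

section
/- Let N_c, C_x, C_y, E_x, E_y be positive integers satisfying E_x · E_y · N_c > (C_x + E_x − 1) · (C_y + E_y − 1). Then for any family of functions S_1, …, S_{N_c} : ℤ × ℤ → ℂ, each finitely supported and supported in a C_x × C_y rectangle, there exists a family α_1, …, α_{N_c} : ℤ × ℤ → ℂ, not all identically zero, with each α_c supported in an E_x × E_y rectangle, such that the sum over c of the convolutions α_c ⋆ S_c is identically zero on ℤ × ℤ. -/
/-!
The map `α ↦ ∑ c, α c * S c` is linear from the `N_c · E_x · E_y`-dimensional space of families of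
kernels supported in `E_x × E_y` rectangles to the `(C_x + E_x − 1)(C_y + E_y − 1)`-dimensional
space of functions supported in the Minkowski sum of the two rectangles, so by the dimension
count it has a nonzero kernel.
-/

/-- `f` is supported in an `a × b` rectangle: its support is contained in
`{(x, y) : 0 ≤ x < a, 0 ≤ y < b}`. -/
def SupportedInRect (f : AddMonoidAlgebra ℂ (ℤ × ℤ)) (a b : ℕ) : Prop :=
  ∀ p ∈ f.coeff.support, 0 ≤ p.1 ∧ p.1 < (a : ℤ) ∧ 0 ≤ p.2 ∧ p.2 < (b : ℤ)

open Module
open scoped Pointwise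

theorem exists_ne_zero_sum_mul_eq_zero_of_finrank_lt {K A ι : Type*} [Field K] [Ring A]
    [Algebra K A] [Fintype ι] (V W : Submodule K A) [FiniteDimensional K V] [FiniteDimensional K W]
    (S : ι → A) (hVW : ∀ c, ∀ v ∈ V, v * S c ∈ W)
    (hdim : finrank K W < Fintype.card ι * finrank K V) :
    ∃ α : ι → A, (∃ c, α c ≠ 0) ∧ (∀ c, α c ∈ V) ∧ ∑ c, α c * S c = 0 := by
  let Φ : (ι → V) →ₗ[K] W := LinearMap.codRestrict W
    (∑ c, LinearMap.mulRight K (S c) ∘ₗ V.subtype ∘ₗ LinearMap.proj c)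
    (fun v => by simpa using W.sum_mem fun c _ => hVW c _ (v c).2)
  have hker : LinearMap.ker Φ ≠ ⊥ := LinearMap.ker_ne_bot_of_finrank_lt <| by
    simpa [finrank_pi_fintype] using hdim
  obtain ⟨v, hv, hv0⟩ := (Submodule.ne_bot_iff _).mp hker
  obtain ⟨c, hc⟩ := Function.ne_iff.mp hv0
  refine ⟨fun c => v c, ⟨c, by simpa using hc⟩, fun c => (v c).2, ?_⟩
  simpa [Φ, Subtype.ext_iff] using hv

namespace AddMonoidAlgebra

variable {K G : Type*} [Field K]

instance finiteDimensional_supported_finset (s : Finset G) :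
    FiniteDimensional K (supported K K (s : Set G)) :=
  (supportedEquivFinsupp (s : Set G)).symm.finiteDimensional

theorem finrank_supported_finset (s : Finset G) :
    finrank K (supported K K (s : Set G)) = s.card := by
  rw [(supportedEquivFinsupp (s : Set G)).finrank_eq, finrank_finsupp_self]
  simp

theorem mul_mem_supported_add [Add G] {s t : Set G} {f g : AddMonoidAlgebra K G}
    (hf : f ∈ supported K K s) (hg : g ∈ supported K K t) : f * g ∈ supported K K (s + t) := by
  classical
  intro p hp
  obtain ⟨x, hx, y, hy, rfl⟩ := Finset.mem_add.mp (support_coeff_mul_subset f g hp)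
  exact Set.add_mem_add (hf hx) (hg hy)

end AddMonoidAlgebra

open AddMonoidAlgebra

noncomputable def rectangle (a b : ℕ) : Finset (ℤ × ℤ) :=
  Finset.Ico 0 (a : ℤ) ×ˢ Finset.Ico 0 (b : ℤ)

theorem card_rectangle (a b : ℕ) : (rectangle a b).card = a * b := by
  simp [rectangle]

/-- An empty rectangle (`a = 0` or `c = 0`) makes the left side empty, so the truncated
subtraction is harmless. -/
theorem rectangle_add_rectangle_subset (a b c d : ℕ) :
    (rectangle a b : Set (ℤ × ℤ)) + rectangle c d ⊆ rectangle (a + c - 1) (b + d - 1) := by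
  rintro _ ⟨x, hx, y, hy, rfl⟩
  simp only [rectangle, Finset.coe_product, Finset.coe_Ico, Set.mem_prod, Set.mem_Ico] at hx hy ⊢
  simp only [Prod.fst_add, Prod.snd_add]
  omega

theorem supportedInRect_iff_mem_supported_rectangle (f : AddMonoidAlgebra ℂ (ℤ × ℤ)) (a b : ℕ) :
    SupportedInRect f a b ↔ f ∈ supported ℂ ℂ (rectangle a b : Set (ℤ × ℤ)) := by
  simp [SupportedInRect, mem_supported, Set.subset_def, rectangle, and_assoc]

theorem annihilating_kernel_exists_general
    (Nc Cx Cy Ex Ey : ℕ)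
    (hcount : Ex * Ey * Nc > (Cx + Ex - 1) * (Cy + Ey - 1))
    (S : Fin Nc → AddMonoidAlgebra ℂ (ℤ × ℤ))
    (hS : ∀ c, SupportedInRect (S c) Cx Cy) :
    ∃ α : Fin Nc → AddMonoidAlgebra ℂ (ℤ × ℤ),
      (¬ ∀ c, α c = 0) ∧
      (∀ c, SupportedInRect (α c) Ex Ey) ∧
      (∑ c, α c * S c) = 0 := by
  have hmul : ∀ c, ∀ α ∈ supported ℂ ℂ (rectangle Ex Ey : Set (ℤ × ℤ)),
      α * S c ∈ supported ℂ ℂ (rectangle (Ex + Cx - 1) (Ey + Cy - 1) : Set (ℤ × ℤ)) :=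
    fun c α hα => supported_mono (rectangle_add_rectangle_subset _ _ _ _)
      (mul_mem_supported_add hα ((supportedInRect_iff_mem_supported_rectangle _ _ _).mp (hS c)))
  have hdim : (Ex + Cx - 1) * (Ey + Cy - 1) < Nc * (Ex * Ey) := by
    rw [add_comm Ex, add_comm Ey]; linarith
  obtain ⟨α, ⟨c, hc⟩, hα, hsum⟩ := exists_ne_zero_sum_mul_eq_zero_of_finrank_lt _ _ S hmul
    (by simpa only [finrank_supported_finset, card_rectangle, Fintype.card_fin] using hdim)
  exact ⟨α, fun h => hc (h c),
    fun c => (supportedInRect_iff_mem_supported_rectangle _ _ _).mpr (hα c), hsum⟩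

/-- **Existence of an annihilating kernel (paper's Theorem 1).**
If `E_x E_y N_c > (C_x + E_x − 1)(C_y + E_y − 1)`, then for any family of `N_c`
finitely supported functions `S_c : ℤ × ℤ → ℂ`, each supported in a `C_x × C_y`
rectangle, there is a not-identically-zero family `α_c`, each supported in an
`E_x × E_y` rectangle, with `∑ c, α_c ⋆ S_c = 0`.  (In `AddMonoidAlgebra`,
multiplication is exactly the discrete convolution
`(f * g) i = ∑ j, f j * g (i - j)`.) -/
theorem annihilating_kernel_exists
    (Nc Cx Cy Ex Ey : ℕ)
    (hNc : 0 < Nc) (hCx : 0 < Cx) (hCy : 0 < Cy) (hEx : 0 < Ex) (hEy : 0 < Ey)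
    (hcount : Ex * Ey * Nc > (Cx + Ex - 1) * (Cy + Ey - 1))
    (S : Fin Nc → AddMonoidAlgebra ℂ (ℤ × ℤ))
    (hS : ∀ c, SupportedInRect (S c) Cx Cy) :
    ∃ α : Fin Nc → AddMonoidAlgebra ℂ (ℤ × ℤ),
      (¬ ∀ c, α c = 0) ∧
      (∀ c, SupportedInRect (α c) Ex Ey) ∧
      (∑ c, α c * S c) = 0 :=
  annihilating_kernel_exists_general Nc Cx Cy Ex Ey hcount S hS
end

section
/- Let N > 1 and p, q > 0 be real numbers. If real numbers E_x > 0 and E_y > 0 satisfy E_x · E_y · N ≥ (p + E_x) · (q + E_y), then √(E_x · E_y) ≥ √(p·q) / (√N − 1). -/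
/-- **Lower bound on the real-relaxed annihilating kernel size.**
If `N > 1`, `p, q > 0`, and positive reals `E_x, E_y` satisfy the feasibility
inequality `E_x E_y N ≥ (p + E_x)(q + E_y)`, then
`√(E_x E_y) ≥ √(p q) / (√N − 1)`. -/
theorem kernel_size_lower_bound
    (N p q Ex Ey : ℝ)
    (hN : 1 < N) (hp : 0 < p) (hq : 0 < q) (hEx : 0 < Ex) (hEy : 0 < Ey)
    (hfeas : Ex * Ey * N ≥ (p + Ex) * (q + Ey)) :
    Real.sqrt (Ex * Ey) ≥ Real.sqrt (p * q) / (Real.sqrt N - 1) := by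
  set t := Real.sqrt (p * q) with ht
  set s := Real.sqrt (Ex * Ey) with hs
  have hs0 : 0 < s := Real.sqrt_pos.mpr (by positivity)
  have ht0 : 0 < t := Real.sqrt_pos.mpr (by positivity)
  have hN0 : (0:ℝ) < N := lt_trans one_pos hN
  have hsqN : 1 < Real.sqrt N := by
    rw [show (1:ℝ) = Real.sqrt 1 by simp]
    exact Real.sqrt_lt_sqrt (by norm_num) hN
  have hden : 0 < Real.sqrt N - 1 := by linarith
  -- AM-GM cross term
  have a0 : (0:ℝ) ≤ p * Ey := by positivity
  have b0 : (0:ℝ) ≤ q * Ex := by positivity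
  have cross : 2 * Real.sqrt (p * Ey) * Real.sqrt (q * Ex) ≤ p * Ey + q * Ex := by
    have := two_mul_le_add_sq (Real.sqrt (p * Ey)) (Real.sqrt (q * Ex))
    rwa [Real.sq_sqrt a0, Real.sq_sqrt b0] at this
  have hts : t * s = Real.sqrt (p * Ey) * Real.sqrt (q * Ex) := by
    rw [ht, hs, ← Real.sqrt_mul (by positivity), ← Real.sqrt_mul a0]
    ring_nf
  have ht2 : t ^ 2 = p * q := Real.sq_sqrt (by positivity)
  have hs2 : s ^ 2 = Ex * Ey := Real.sq_sqrt (by positivity)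
  have key : (t + s) ^ 2 ≤ s ^ 2 * N := by
    have expand : (t + s) ^ 2 = t ^ 2 + 2 * (t * s) + s ^ 2 := by ring
    have h1 : (t + s) ^ 2 ≤ (p + Ex) * (q + Ey) := by
      rw [expand, ht2, hs2, hts]
      nlinarith [cross]
    calc (t + s) ^ 2 ≤ (p + Ex) * (q + Ey) := h1
      _ ≤ Ex * Ey * N := hfeas
      _ = s ^ 2 * N := by rw [hs2]
  have key2 : t + s ≤ s * Real.sqrt N := by
    have h2 : Real.sqrt ((t + s) ^ 2) ≤ Real.sqrt (s ^ 2 * N) := Real.sqrt_le_sqrt key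
    rwa [Real.sqrt_sq (by positivity), Real.sqrt_mul (by positivity),
      Real.sqrt_sq hs0.le] at h2
  rw [ge_iff_le, div_le_iff₀ hden]
  nlinarith [key2]
end

section
/- Let N > 1 and p, q > 0 be real numbers. Then the value ((1 + √N)/(N − 1))² · p · q is the least element of the set { E_x · E_y : E_x > 0, E_y > 0, E_x · E_y · N ≥ (p + E_x) · (q + E_y) } ⊆ ℝ; i.e., it belongs to this set (attained at E_x = ((1+√N)/(N−1))·p and E_y = ((1+√N)/(N−1))·q) and is a lower bound for it. -/
/-!
Write `c = (1 + √N)/(N - 1)`, so that `c (√N - 1) = 1`, i.e. `c √N = 1 + c`. The rectangle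
`[c p, c q]` satisfies the constraint with equality, because `c² N = (1 + c)²`. Conversely, by
Cauchy–Schwarz `(p + E_x)(q + E_y) ≥ (√(pq) + √(E_x E_y))²`, so the constraint forces
`√(E_x E_y) · √N ≥ √(pq) + √(E_x E_y)`, i.e. `√(pq) ≤ (√N - 1) √(E_x E_y)`; squaring and
multiplying by `c²` gives `c² p q ≤ E_x E_y`.
-/

open Real

lemma one_add_sqrt_div_sub_one_mul_sqrt_sub_one {N : ℝ} (hN0 : 0 ≤ N) (hN1 : N ≠ 1) :
    (1 + √N) / (N - 1) * (√N - 1) = 1 := by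
  have hN : (1 + √N) * (√N - 1) = N - 1 := by
    linear_combination sq_sqrt hN0
  rw [div_mul_eq_mul_div, hN, div_self (sub_ne_zero.mpr hN1)]

lemma sqrt_mul_add_sqrt_mul_sq_le {a b c d : ℝ} (ha : 0 ≤ a) (hb : 0 ≤ b) (hc : 0 ≤ c)
    (hd : 0 ≤ d) : (√(a * b) + √(c * d)) ^ 2 ≤ (a + c) * (b + d) := by
  have hcross : √(a * b) * √(c * d) = √(a * d) * √(c * b) := by
    rw [← sqrt_mul (by positivity), ← sqrt_mul (by positivity)]
    ring_nf
  nlinarith [sq_nonneg (√(a * d) - √(c * b)), sq_sqrt (mul_nonneg ha hb),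
    sq_sqrt (mul_nonneg hc hd), sq_sqrt (mul_nonneg ha hd), sq_sqrt (mul_nonneg hc hb)]

lemma mul_le_sqrt_sub_one_sq_mul_of_add_mul_add_le {N p q x y : ℝ} (hN : 0 ≤ N)
    (hp : 0 ≤ p) (hq : 0 ≤ q) (hx : 0 ≤ x) (hy : 0 ≤ y)
    (h : (p + x) * (q + y) ≤ x * y * N) : p * q ≤ (√N - 1) ^ 2 * (x * y) := by
  set m := √(p * q)
  set t := √(x * y)
  have hsq : (m + t) ^ 2 ≤ (t * √N) ^ 2 := by
    calc (m + t) ^ 2 ≤ (p + x) * (q + y) := sqrt_mul_add_sqrt_mul_sq_le hp hq hx hy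
      _ ≤ x * y * N := h
      _ = (t * √N) ^ 2 := by rw [mul_pow, sq_sqrt (mul_nonneg hx hy), sq_sqrt hN]
  have hm : m ≤ t * (√N - 1) := by
    have := (pow_le_pow_iff_left₀ (by positivity) (by positivity) two_ne_zero).mp hsq
    linarith
  calc p * q = m ^ 2 := (sq_sqrt (mul_nonneg hp hq)).symm
    _ ≤ (t * (√N - 1)) ^ 2 := pow_le_pow_left₀ (sqrt_nonneg _) hm 2
    _ = (√N - 1) ^ 2 * (x * y) := by rw [mul_pow, sq_sqrt (mul_nonneg hx hy), mul_comm]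

/-- **Smallest annihilating-kernel area (paper's eq. (2)).**
For `N > 1` and `p, q > 0`, the value `((1 + √N)/(N − 1))² · p · q` is the
least element of `{ E_x E_y : E_x > 0, E_y > 0, E_x E_y N ≥ (p + E_x)(q + E_y) }`,
attained at `E_x = ((1 + √N)/(N − 1)) p`, `E_y = ((1 + √N)/(N − 1)) q`. -/
theorem kernel_area_isLeast
    (N p q : ℝ) (hN : 1 < N) (hp : 0 < p) (hq : 0 < q) :
    IsLeast
      { A : ℝ | ∃ Ex Ey : ℝ, 0 < Ex ∧ 0 < Ey ∧
          Ex * Ey * N ≥ (p + Ex) * (q + Ey) ∧ A = Ex * Ey }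
      (((1 + Real.sqrt N) / (N - 1)) ^ 2 * p * q) ∧
    (((1 + Real.sqrt N) / (N - 1)) ^ 2 * p * q =
      ((1 + Real.sqrt N) / (N - 1) * p) * ((1 + Real.sqrt N) / (N - 1) * q)) := by
  set c := (1 + √N) / (N - 1)
  have hc : c * (√N - 1) = 1 := one_add_sqrt_div_sub_one_mul_sqrt_sub_one (by linarith) hN.ne'
  have hc0 : 0 < c := div_pos (by positivity) (by linarith)
  have hcN : c ^ 2 * N = (1 + c) ^ 2 := by
    rw [← sq_sqrt (by linarith : 0 ≤ N)]
    linear_combination (c * √N + 1 + c) * hc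
  refine ⟨⟨⟨c * p, c * q, by positivity, by positivity, ?_, by ring⟩, ?_⟩, by ring⟩
  · exact le_of_eq (by linear_combination p * q * hcN.symm)
  · rintro _ ⟨Ex, Ey, hEx, hEy, hle, rfl⟩
    have hpq := mul_le_sqrt_sub_one_sq_mul_of_add_mul_add_le (by linarith) hp.le hq.le
      hEx.le hEy.le hle
    calc c ^ 2 * p * q = c ^ 2 * (p * q) := by ring
      _ ≤ c ^ 2 * ((√N - 1) ^ 2 * (Ex * Ey)) := by gcongr
      _ = Ex * Ey := by rw [← mul_assoc, ← mul_pow, hc, one_pow, one_mul]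
end
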